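/- Let 0 < α < 1. There exists a constant c_α depending only on α such that sup_{n∈ℕ_+} ∫_G |K_n^α(x)| dμ(x) ≤ c_α < ∞. -/

import Mathlib

open MeasureTheory Filter Finset
open scoped ENNReal NNReal

noncomputable section

/-- The dyadic group `G = ∏ Z₂`. -/
abbrev G : Type := ℕ → ZMod 2

instance : TopologicalSpace (ZMod 2) := ⊥
instance : DiscreteTopology (ZMod 2) := ⟨rfl⟩
instance : MeasurableSpace (ZMod 2) := ⊤
instance : BorelSpace (ZMod 2) := ⟨borel_eq_top_of_discrete.symm⟩
instance : ContinuousAdd (ZMod 2) := ⟨continuous_of_discreteTopology⟩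
instance : ContinuousNeg (ZMod 2) := ⟨continuous_of_discreteTopology⟩
instance : IsTopologicalAddGroup (ZMod 2) := ⟨⟩

/-- The normalized Haar measure `μ` on the dyadic group `G`. -/
def μG : Measure G := Measure.addHaarMeasure ⊤

/-- The Rademacher functions `r_k(x) = (-1)^{x_k}`. -/
def rad (k : ℕ) (x : G) : ℝ := (-1 : ℝ) ^ (x k).val

/-- The Walsh functions `w_n = ∏_k r_k^{n_k}`, where `n = ∑ n_k 2^k`. -/
def walsh (n : ℕ) (x : G) : ℝ := ∏ k ∈ Finset.range n, rad k x ^ (Nat.testBit n k).toNat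

/-- The Dirichlet kernels `D_n = ∑_{k=0}^{n-1} w_k`. -/
def dirichlet (n : ℕ) (x : G) : ℝ := ∑ k ∈ Finset.range n, walsh k x

/-- The Fejér kernels `K_n = (1/n) ∑_{k=1}^{n} D_k`. -/
def fejer (n : ℕ) (x : G) : ℝ := (n : ℝ)⁻¹ * ∑ k ∈ Finset.Icc 1 n, dirichlet k x

/-- The Cesàro numbers `A_n^α = ((α+1)⋯(α+n))/n!`. -/
def cesA (α : ℝ) (n : ℕ) : ℝ := (∏ i ∈ Finset.range n, (α + i + 1)) / n.factorial

/-- The `(C,α)` kernels `K_n^α = (1/A_n^α) ∑_{k=1}^n A_{n-k}^{α-1} D_k`. -/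
def cesKernel (α : ℝ) (n : ℕ) (x : G) : ℝ :=
  (cesA α n)⁻¹ * ∑ k ∈ Finset.Icc 1 n, cesA (α - 1) (n - k) * dirichlet k x

/-- Walsh–Fourier coefficients of an integrable function. -/
def walshCoeff (f : G → ℝ) (k : ℕ) : ℝ := ∫ x, f x * walsh k x ∂μG

/-- Partial sums `S_m f` of the Walsh–Fourier series. -/
def partialSum (f : G → ℝ) (m : ℕ) (x : G) : ℝ :=
  ∑ k ∈ Finset.range m, walshCoeff f k * walsh k x

/-- The `(C,α)` means `σ_n^α f = (1/A_n^α) ∑_{k=1}^n A_{n-k}^{α-1} S_k f`. -/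
def cesaroMean (α : ℝ) (f : G → ℝ) (n : ℕ) (x : G) : ℝ :=
  (cesA α n)⁻¹ * ∑ k ∈ Finset.Icc 1 n, cesA (α - 1) (n - k) * partialSum f k x

/-- The dyadic interval `I_n(x)`. -/
def dyadicI (n : ℕ) (x : G) : Set G := {y | ∀ i < n, y i = x i}

/-- `e_k ∈ G`: the element whose `k`-th coordinate is `1` and all others `0`. -/
def eG (k : ℕ) : G := fun i => if i = k then 1 else 0

/-- The projection onto the first `n` coordinates. -/
def projG (n : ℕ) : G → (Fin n → ZMod 2) := fun x i => x i

/-- The dyadic filtration `ℱ_n`, generated by the dyadic intervals of length `n`. -/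
def dyadicF : Filtration ℕ (inferInstance : MeasurableSpace G) where
  seq n := MeasurableSpace.comap (projG n) inferInstance
  mono' := by
    intro n m hnm
    have h : projG n = (fun (y : Fin m → ZMod 2) (i : Fin n) => y (Fin.castLE hnm i)) ∘ projG m :=
      rfl
    simp only []
    rw [h, ← MeasurableSpace.comap_comp]
    exact MeasurableSpace.comap_mono
      ((measurable_pi_lambda _ fun i => measurable_pi_apply _).comap_le)
  le' := fun n => (measurable_pi_lambda _ fun i => measurable_pi_apply _).comap_le

/-- The Walsh–Fourier coefficients `F̂(k) = lim_n ∫ F_n w_k dμ` of a martingale. -/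
def martCoeff (F : ℕ → G → ℝ) (k : ℕ) : ℝ :=
  limUnder atTop (fun n => ∫ x, F n x * walsh k x ∂μG)

/-- Partial sums `S_m F` of the Walsh–Fourier series of a martingale. -/
def martSum (F : ℕ → G → ℝ) (m : ℕ) (x : G) : ℝ :=
  ∑ k ∈ Finset.range m, martCoeff F k * walsh k x

/-- The `(C,α)` means of a martingale. -/
def martCesaro (α : ℝ) (F : ℕ → G → ℝ) (n : ℕ) (x : G) : ℝ :=
  (cesA α n)⁻¹ * ∑ k ∈ Finset.Icc 1 n, cesA (α - 1) (n - k) * martSum F k x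

/-- The `L_p(G)` quasi-norm `(∫ |f|^p dμ)^{1/p}`, valued in `ℝ≥0∞`. -/
def LpNormG (p : ℝ) (f : G → ℝ) : ℝ≥0∞ :=
  (∫⁻ x, ENNReal.ofReal |f x| ^ p ∂μG) ^ (1 / p)

/-- The Hardy space quasi-norm `‖F‖_{H_p} = ‖sup_n |F_n|‖_p` of a martingale. -/
def hardyNorm (p : ℝ) (F : ℕ → G → ℝ) : ℝ≥0∞ :=
  (∫⁻ x, (⨆ n, ENNReal.ofReal |F n x|) ^ p ∂μG) ^ (1 / p)

/-- The Hardy quasi-norm of an integrable function, via its generated martingale `(E_n f)`. -/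
def hardyFnNorm (p : ℝ) (f : G → ℝ) : ℝ≥0∞ :=
  hardyNorm p (fun n => μG[f | dyadicF n])

/-
Write `n = 2 ^ A + m` with `m < 2 ^ A`. The Paley identities
`D (2 ^ A + j) = D (2 ^ A) + r_A * D j` and `D (2 ^ A - j) = D (2 ^ A) - w (2 ^ A - 1) * D j`
split `A_n^α K_n^α = ∑_{j<n} A_j^{α-1} D (n - j)` into a multiple of `D (2 ^ A)` (nonnegative, of
integral `1`), the sum `∑_{j<2^A} A_{m+j}^{α-1} D j` and `r_A A_m^α K_m^α`. Since `α ≤ 1`, the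
weights `A_j^{α-1}` decrease, so Abel summation bounds the middle sum by the Fejér sums
`∑_{k<N} D k`, whose integrals of absolute value are at most `2 N`. Since `α > 0`,
`A_m^α ≤ A_n^α / (1 + α / 2)`, and induction on `n` gives
`∫ |A_n^α K_n^α| ≤ 3 (2 + α) / α * A_n^α`.
-/

namespace Nat

theorem two_pow_add_eq_xor {A i : ℕ} (h : i < 2 ^ A) : 2 ^ A + i = 2 ^ A ^^^ i := by
  refine Nat.eq_of_testBit_eq fun k => ?_
  rcases lt_trichotomy k A with hk | rfl | hk
  · simp [Nat.testBit_two_pow_add_gt hk, Nat.testBit_xor, hk.ne']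
  · simp [Nat.testBit_two_pow_add_eq, Nat.testBit_xor, Nat.testBit_lt_two_pow h]
  · have h2 : 2 ^ A + i < 2 ^ k := by
      calc 2 ^ A + i < 2 ^ (A + 1) := by rw [pow_succ]; omega
        _ ≤ 2 ^ k := Nat.pow_le_pow_right two_pos hk
    simp [Nat.testBit_lt_two_pow h2, Nat.testBit_xor, hk.ne,
      Nat.testBit_lt_two_pow (h.trans_le (Nat.pow_le_pow_right two_pos hk.le))]

theorem two_pow_sub_one_sub_eq_xor {A i : ℕ} (h : i < 2 ^ A) :
    2 ^ A - 1 - i = (2 ^ A - 1) ^^^ i := by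
  refine Nat.eq_of_testBit_eq fun k => ?_
  rw [show 2 ^ A - 1 - i = 2 ^ A - (i + 1) by omega, Nat.testBit_two_pow_sub_succ h,
    Nat.testBit_xor, Nat.testBit_two_pow_sub_one]
  by_cases hk : k < A
  · simp [hk]
  · simp [hk, Nat.testBit_lt_two_pow (h.trans_le (Nat.pow_le_pow_right two_pos (not_lt.1 hk)))]

@[elab_as_elim]
theorem two_pow_add_induction {P : ℕ → Prop} (zero : P 0)
    (two_pow_add : ∀ A m, m < 2 ^ A → P m → P (2 ^ A + m)) (n : ℕ) : P n := by
  induction n using Nat.strong_induction_on with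
  | _ n ih =>
    rcases Nat.eq_zero_or_pos n with rfl | hn
    · exact zero
    have hlow : 2 ^ Nat.log 2 n ≤ n := Nat.pow_log_le_self 2 hn.ne'
    have hhigh : n < 2 ^ (Nat.log 2 n + 1) := Nat.lt_pow_succ_log_self one_lt_two n
    rw [pow_succ] at hhigh
    have := two_pow_add (Nat.log 2 n) (n - 2 ^ Nat.log 2 n) (by omega)
      (ih _ (Nat.sub_lt hn (Nat.two_pow_pos _)))
    rwa [Nat.add_sub_cancel' hlow] at this

end Nat

section Integration

variable {X : Type*} [MeasurableSpace X] {μ : Measure X}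

theorem integral_abs_add_le {f g : X → ℝ} (hf : Integrable f μ) (hg : Integrable g μ) :
    ∫ x, |f x + g x| ∂μ ≤ ∫ x, |f x| ∂μ + ∫ x, |g x| ∂μ := by
  rw [← integral_add hf.abs hg.abs]
  exact integral_mono (hf.add hg).abs (hf.abs.add hg.abs) fun x => abs_add_le _ _

theorem integral_abs_sum_le {ι : Type*} (s : Finset ι) {f : ι → X → ℝ}
    (hf : ∀ i ∈ s, Integrable (f i) μ) :
    ∫ x, |∑ i ∈ s, f i x| ∂μ ≤ ∑ i ∈ s, ∫ x, |f i x| ∂μ := by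
  rw [← integral_finsetSum s fun i hi => (hf i hi).abs]
  exact integral_mono (integrable_finsetSum s hf).abs
    (integrable_finsetSum s fun i hi => (hf i hi).abs) fun x => abs_sum_le_sum_abs _ _

theorem integral_abs_const_mul (c : ℝ) (f : X → ℝ) :
    ∫ x, |c * f x| ∂μ = |c| * ∫ x, |f x| ∂μ := by
  simp_rw [abs_mul, integral_const_mul]

variable [AddGroup X] [MeasurableAdd X] [μ.IsAddRightInvariant]

theorem integral_eq_zero_of_add_right_eq_neg {f : X → ℝ} (a : X)
    (h : ∀ x, f (x + a) = -f x) : ∫ x, f x ∂μ = 0 := by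
  have := integral_add_right_eq_self (μ := μ) f a
  simp_rw [h, integral_neg] at this
  linarith

end Integration

instance : μG.IsAddLeftInvariant := by unfold μG; infer_instance

instance : IsProbabilityMeasure μG :=
  ⟨by simpa [μG] using
    Measure.addHaarMeasure_self (K₀ := (⊤ : TopologicalSpace.PositiveCompacts G))⟩

theorem integrable_of_continuous {f : G → ℝ} (hf : Continuous f) : Integrable f μG :=
  hf.integrable_of_hasCompactSupport (HasCompactSupport.of_compactSpace f)

namespace Walsh

@[fun_prop]
theorem continuous_rad (k : ℕ) : Continuous (rad k) :=
  (continuous_of_discreteTopology (f := fun a : ZMod 2 => (-1 : ℝ) ^ a.val)).comp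
    (continuous_apply k)

theorem rad_eq_one_or_eq_neg_one (k : ℕ) (x : G) : rad k x = 1 ∨ rad k x = -1 :=
  neg_one_pow_eq_or ℝ _

theorem rad_mul_self (k : ℕ) (x : G) : rad k x * rad k x = 1 := by
  rcases rad_eq_one_or_eq_neg_one k x with h | h <;> simp [h]

theorem abs_rad (k : ℕ) (x : G) : |rad k x| = 1 := by
  rcases rad_eq_one_or_eq_neg_one k x with h | h <;> simp [h]

theorem rad_add (k : ℕ) (x y : G) : rad k (x + y) = rad k x * rad k y := by
  rw [rad, rad, rad, Pi.add_apply, ZMod.val_add, ← neg_one_pow_eq_pow_mod_two, pow_add]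

theorem rad_eG (j k : ℕ) : rad j (eG k) = if j = k then -1 else 1 := by
  by_cases h : j = k <;> simp [rad, eG, h, ZMod.val_one]

@[fun_prop]
theorem continuous_walsh (n : ℕ) : Continuous (walsh n) := by
  unfold walsh; fun_prop

theorem abs_walsh (n : ℕ) (x : G) : |walsh n x| = 1 := by
  simp [walsh, Finset.abs_prod, abs_rad]

theorem walsh_zero (x : G) : walsh 0 x = 1 := by simp [walsh]

theorem walsh_add (n : ℕ) (x y : G) : walsh n (x + y) = walsh n x * walsh n y := by
  simp only [walsh, rad_add, mul_pow, prod_mul_distrib]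

theorem prod_range_rad_pow_testBit_of_lt {n P Q : ℕ} (hPQ : P ≤ Q) (hn : n < 2 ^ P) (x : G) :
    ∏ k ∈ range Q, rad k x ^ (n.testBit k).toNat =
      ∏ k ∈ range P, rad k x ^ (n.testBit k).toNat := by
  refine (prod_subset (range_subset_range.2 hPQ) fun k _ hk => ?_).symm
  have : n < 2 ^ k := hn.trans_le (Nat.pow_le_pow_right two_pos (by simpa using hk))
  simp [Nat.testBit_lt_two_pow this]

theorem walsh_eq_prod_range {n M : ℕ} (h : n < 2 ^ M) (x : G) :
    walsh n x = ∏ k ∈ range M, rad k x ^ (n.testBit k).toNat := by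
  have hmin : n < 2 ^ min n M := by
    rcases min_choice n M with h' | h' <;> rw [h']
    exacts [n.lt_two_pow_self, h]
  rw [walsh, prod_range_rad_pow_testBit_of_lt (min_le_left n M) hmin,
    prod_range_rad_pow_testBit_of_lt (min_le_right n M) hmin]

theorem walsh_xor (a b : ℕ) (x : G) : walsh (a ^^^ b) x = walsh a x * walsh b x := by
  have ha : a < 2 ^ (a + b) :=
    a.lt_two_pow_self.trans_le (Nat.pow_le_pow_right two_pos (by omega))
  have hb : b < 2 ^ (a + b) :=
    b.lt_two_pow_self.trans_le (Nat.pow_le_pow_right two_pos (by omega))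
  rw [walsh_eq_prod_range ha, walsh_eq_prod_range hb,
    walsh_eq_prod_range (Nat.xor_lt_two_pow ha hb), ← prod_mul_distrib]
  refine prod_congr rfl fun k _ => ?_
  rw [Nat.testBit_xor]
  cases a.testBit k <;> cases b.testBit k <;> simp [rad_mul_self]

theorem walsh_two_pow (k : ℕ) (x : G) : walsh (2 ^ k) x = rad k x := by
  rw [walsh_eq_prod_range (Nat.pow_lt_pow_right one_lt_two k.lt_succ_self), prod_range_succ,
    prod_eq_one fun j hj => by simp [(mem_range.1 hj).ne']]
  simp

theorem walsh_add_eG (n k : ℕ) (x : G) :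
    walsh n (x + eG k) = if n.testBit k then -walsh n x else walsh n x := by
  have hn : n < 2 ^ (n + k + 1) :=
    n.lt_two_pow_self.trans_le (Nat.pow_le_pow_right two_pos (by omega))
  have : walsh n (eG k) = if n.testBit k then -1 else 1 := by
    rw [walsh_eq_prod_range hn, prod_eq_single k (fun j _ hj => by simp [rad_eG, hj])
      (fun h => absurd (mem_range.2 (by omega)) h)]
    cases n.testBit k <;> simp [rad_eG]
  rw [walsh_add, this]
  split_ifs <;> ring

theorem integral_walsh {n : ℕ} (hn : n ≠ 0) : ∫ x, walsh n x ∂μG = 0 := by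
  obtain ⟨k, hk⟩ := Nat.exists_testBit_of_ne_zero hn
  exact integral_eq_zero_of_add_right_eq_neg (eG k) fun x => by simp [walsh_add_eG, hk]

theorem integral_rad_mul_eq_zero {k : ℕ} {f : G → ℝ} (hf : ∀ x, f (x + eG k) = f x) :
    ∫ x, rad k x * f x ∂μG = 0 :=
  integral_eq_zero_of_add_right_eq_neg (eG k) fun x => by simp [rad_add, rad_eG, hf]

@[fun_prop]
theorem continuous_dirichlet (n : ℕ) : Continuous (dirichlet n) := by
  unfold dirichlet; fun_prop

theorem dirichlet_zero (x : G) : dirichlet 0 x = 0 := by simp [dirichlet]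

theorem dirichlet_succ (n : ℕ) (x : G) : dirichlet (n + 1) x = dirichlet n x + walsh n x := by
  simp [dirichlet, sum_range_succ]

theorem dirichlet_two_pow_add {A j : ℕ} (h : j ≤ 2 ^ A) (x : G) :
    dirichlet (2 ^ A + j) x = dirichlet (2 ^ A) x + rad A x * dirichlet j x := by
  rw [dirichlet, sum_range_add, dirichlet, dirichlet, mul_sum]
  congr 1
  refine sum_congr rfl fun i hi => ?_
  rw [Nat.two_pow_add_eq_xor (by simp at hi; omega), walsh_xor, walsh_two_pow]

theorem dirichlet_two_pow_sub {A j : ℕ} (h : j ≤ 2 ^ A) (x : G) :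
    dirichlet (2 ^ A - j) x = dirichlet (2 ^ A) x - walsh (2 ^ A - 1) x * dirichlet j x := by
  induction j with
  | zero => simp [dirichlet_zero]
  | succ j ih =>
    have hw : walsh (2 ^ A - (j + 1)) x = walsh (2 ^ A - 1) x * walsh j x := by
      rw [show 2 ^ A - (j + 1) = 2 ^ A - 1 - j by omega,
        Nat.two_pow_sub_one_sub_eq_xor (by omega), walsh_xor]
    have := ih (by omega)
    rw [show 2 ^ A - j = 2 ^ A - (j + 1) + 1 by omega, dirichlet_succ, hw] at this
    rw [dirichlet_succ]
    linarith

theorem dirichlet_two_pow_nonneg (A : ℕ) (x : G) : 0 ≤ dirichlet (2 ^ A) x := by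
  induction A with
  | zero => simp [dirichlet, walsh_zero]
  | succ A ih =>
    rw [pow_succ, mul_two, dirichlet_two_pow_add le_rfl, ← one_add_mul]
    rcases rad_eq_one_or_eq_neg_one A x with h | h <;> rw [h] <;> nlinarith

theorem integral_dirichlet_two_pow (A : ℕ) : ∫ x, dirichlet (2 ^ A) x ∂μG = 1 := by
  unfold dirichlet
  rw [integral_finsetSum _ fun k _ => integrable_of_continuous (continuous_walsh k),
    sum_eq_single 0 (fun k _ hk => integral_walsh hk) (by simp)]
  simp [walsh_zero]

theorem integral_abs_dirichlet_two_pow (A : ℕ) : ∫ x, |dirichlet (2 ^ A) x| ∂μG = 1 := by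
  simp_rw [abs_of_nonneg (dirichlet_two_pow_nonneg A _), integral_dirichlet_two_pow]

theorem dirichlet_add_eG {n k : ℕ} (h : n ≤ 2 ^ k) (x : G) :
    dirichlet n (x + eG k) = dirichlet n x :=
  sum_congr rfl fun i hi => by
    simp [walsh_add_eG, Nat.testBit_lt_two_pow ((mem_range.1 hi).trans_le h)]

def dirichletSum (n : ℕ) (x : G) : ℝ := ∑ k ∈ range n, dirichlet k x

@[fun_prop]
theorem continuous_dirichletSum (n : ℕ) : Continuous (dirichletSum n) := by
  unfold dirichletSum; fun_prop

theorem dirichletSum_two_pow_add {A m : ℕ} (h : m ≤ 2 ^ A) (x : G) :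
    dirichletSum (2 ^ A + m) x =
      dirichletSum (2 ^ A) x + m * dirichlet (2 ^ A) x + rad A x * dirichletSum m x := by
  rw [dirichletSum, sum_range_add, sum_congr rfl fun i hi => dirichlet_two_pow_add
    (by simp at hi; omega) x, sum_add_distrib, sum_const, card_range, nsmul_eq_mul,
    dirichletSum, dirichletSum, mul_sum, add_assoc]

theorem integral_abs_dirichletSum_two_pow (A : ℕ) :
    ∫ x, |dirichletSum (2 ^ A) x| ∂μG ≤ 2 ^ A := by
  induction A with
  | zero => simp [dirichletSum, dirichlet_zero]
  | succ A ih =>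
    have hsplit : ∀ x, dirichletSum (2 ^ (A + 1)) x =
        (1 + rad A x) * dirichletSum (2 ^ A) x + 2 ^ A * dirichlet (2 ^ A) x := fun x => by
      rw [pow_succ, mul_two, dirichletSum_two_pow_add le_rfl]; push_cast; ring
    have hrad : ∀ x, 0 ≤ 1 + rad A x := fun x => by
      rcases rad_eq_one_or_eq_neg_one A x with h | h <;> rw [h] <;> norm_num
    have hzero : ∫ x, rad A x * |dirichletSum (2 ^ A) x| ∂μG = 0 :=
      integral_rad_mul_eq_zero fun x => by
        simp only [dirichletSum, sum_congr rfl fun k hk => dirichlet_add_eG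
          (mem_range.1 hk).le x]
    calc ∫ x, |dirichletSum (2 ^ (A + 1)) x| ∂μG
        ≤ ∫ x, |(1 + rad A x) * dirichletSum (2 ^ A) x| ∂μG
          + ∫ x, |2 ^ A * dirichlet (2 ^ A) x| ∂μG := by
          simp_rw [hsplit]
          exact integral_abs_add_le (integrable_of_continuous (by fun_prop))
            (integrable_of_continuous (by fun_prop))
      _ = ∫ x, |dirichletSum (2 ^ A) x| ∂μG + 2 ^ A := by
          simp_rw [abs_mul, abs_of_nonneg (hrad _), add_mul, one_mul]
          rw [integral_add (integrable_of_continuous (by fun_prop))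
            (integrable_of_continuous (by fun_prop)), hzero, integral_const_mul,
            integral_abs_dirichlet_two_pow]
          simp
      _ ≤ 2 ^ (A + 1) := by rw [pow_succ]; linarith

theorem integral_abs_dirichletSum_le (n : ℕ) : ∫ x, |dirichletSum n x| ∂μG ≤ 2 * n := by
  induction n using Nat.two_pow_add_induction with
  | zero => simp [dirichletSum]
  | two_pow_add A m hm ih =>
    calc ∫ x, |dirichletSum (2 ^ A + m) x| ∂μG
        ≤ ∫ x, |dirichletSum (2 ^ A) x| ∂μG + ∫ x, |m * dirichlet (2 ^ A) x| ∂μG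
          + ∫ x, |rad A x * dirichletSum m x| ∂μG := by
          simp_rw [dirichletSum_two_pow_add hm.le]
          refine (integral_abs_add_le (integrable_of_continuous (by fun_prop))
            (integrable_of_continuous (by fun_prop))).trans (add_le_add ?_ le_rfl)
          exact integral_abs_add_le (integrable_of_continuous (by fun_prop))
            (integrable_of_continuous (by fun_prop))
      _ ≤ 2 ^ A + m + 2 * m := by
          simp_rw [integral_abs_const_mul, abs_mul, abs_rad, one_mul,
            integral_abs_dirichlet_two_pow, Nat.abs_cast, mul_one]
          linarith [integral_abs_dirichletSum_two_pow A]
      _ ≤ 2 * ((2 ^ A + m : ℕ) : ℝ) := by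
          have : (m : ℝ) < 2 ^ A := by exact_mod_cast hm
          push_cast; linarith

theorem integral_abs_sum_mul_dirichlet_le {c : ℕ → ℝ} (hc : Antitone c) (hc0 : ∀ j, 0 ≤ c j)
    (N : ℕ) : ∫ x, |∑ j ∈ range N, c j * dirichlet j x| ∂μG ≤ 2 * ∑ j ∈ range N, c j := by
  have hdiff : ∀ i, 0 ≤ c i - c (i + 1) := fun i => sub_nonneg.2 (hc i.le_succ)
  have habel : ∀ x, ∑ j ∈ range N, c j * dirichlet j x =
      c (N - 1) * dirichletSum N x +
        ∑ i ∈ range (N - 1), (c i - c (i + 1)) * dirichletSum (i + 1) x := by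
    intro x
    have := sum_range_by_parts c (fun j => dirichlet j x) N
    simp only [smul_eq_mul] at this
    rw [this, dirichletSum, sub_eq_add_neg, ← sum_neg_distrib]
    simp only [dirichletSum, ← neg_mul, neg_sub]
  have hcount : ∑ j ∈ range N, c j =
      c (N - 1) * N + ∑ i ∈ range (N - 1), (c i - c (i + 1)) * (i + 1 : ℕ) := by
    have := sum_range_by_parts c (fun _ => (1 : ℝ)) N
    simp only [smul_eq_mul, mul_one, sum_const, card_range, nsmul_eq_mul] at this
    rw [this, sub_eq_add_neg, ← sum_neg_distrib]
    simp only [← neg_mul, neg_sub]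
  simp_rw [habel]
  calc _ ≤ ∫ x, |c (N - 1) * dirichletSum N x| ∂μG
        + ∑ i ∈ range (N - 1), ∫ x, |(c i - c (i + 1)) * dirichletSum (i + 1) x| ∂μG :=
        (integral_abs_add_le (integrable_of_continuous (by fun_prop))
          (integrable_of_continuous (by fun_prop))).trans (add_le_add le_rfl
          (integral_abs_sum_le _ fun i _ => integrable_of_continuous (by fun_prop)))
    _ ≤ c (N - 1) * (2 * N) +
          ∑ i ∈ range (N - 1), (c i - c (i + 1)) * (2 * (i + 1 : ℕ)) := by
        simp_rw [integral_abs_const_mul, abs_of_nonneg (hc0 _), abs_of_nonneg (hdiff _)]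
        gcongr with i
        · exact hc0 _
        · exact integral_abs_dirichletSum_le N
        · exact hdiff i
        · exact integral_abs_dirichletSum_le (i + 1)
    _ = 2 * ∑ j ∈ range N, c j := by
        rw [hcount, mul_add, mul_sum]
        congr 1 <;> [ring; exact sum_congr rfl fun i _ => by ring]

theorem cesA_pos {β : ℝ} (hβ : -1 < β) (n : ℕ) : 0 < cesA β n :=
  div_pos (prod_pos fun i _ => by linarith [(i.cast_nonneg : (0 : ℝ) ≤ i)])
    (Nat.cast_pos.2 n.factorial_pos)

theorem succ_mul_cesA_succ (β : ℝ) (n : ℕ) :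
    (n + 1) * cesA β (n + 1) = (β + n + 1) * cesA β n := by
  simp only [cesA, prod_range_succ, Nat.factorial_succ, Nat.cast_mul]
  field_simp
  push_cast
  ring

theorem succ_mul_cesA_sub_one_succ (α : ℝ) (n : ℕ) :
    (n + 1) * cesA (α - 1) (n + 1) = α * cesA α n := by
  have hprod : ∏ i ∈ range n, (α - 1 + ((i + 1 : ℕ) : ℝ) + 1) = ∏ i ∈ range n, (α + i + 1) :=
    prod_congr rfl fun i _ => by push_cast; ring
  rw [cesA, cesA, prod_range_succ', hprod, Nat.factorial_succ, Nat.cast_mul]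
  field_simp
  push_cast
  ring

theorem sum_range_cesA_sub_one (α : ℝ) (n : ℕ) :
    ∑ j ∈ range (n + 1), cesA (α - 1) j = cesA α n := by
  induction n with
  | zero => simp [cesA]
  | succ n ih =>
    rw [sum_range_succ, ih]
    refine mul_left_cancel₀ (by positivity : (n + 1 : ℝ) ≠ 0) ?_
    linear_combination succ_mul_cesA_sub_one_succ α n - succ_mul_cesA_succ α n

theorem sum_range_cesA_sub_one_le {α : ℝ} (hα : 0 < α) (n : ℕ) :
    ∑ j ∈ range n, cesA (α - 1) j ≤ cesA α n := by
  rw [← sum_range_cesA_sub_one, sum_range_succ]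
  linarith [cesA_pos (by linarith : -1 < α - 1) n]

theorem cesA_monotone {β : ℝ} (hβ : 0 ≤ β) : Monotone (cesA β) := by
  refine monotone_nat_of_le_succ fun n =>
    le_of_mul_le_mul_left ?_ (by positivity : (0 : ℝ) < n + 1)
  rw [succ_mul_cesA_succ]
  nlinarith [cesA_pos (by linarith : -1 < β) n]

theorem cesA_antitone {β : ℝ} (hβ₁ : -1 < β) (hβ₀ : β ≤ 0) : Antitone (cesA β) := by
  refine antitone_nat_of_succ_le fun n =>
    le_of_mul_le_mul_left ?_ (by positivity : (0 : ℝ) < n + 1)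
  rw [succ_mul_cesA_succ]
  nlinarith [cesA_pos hβ₁ n]

theorem add_mul_cesA_le {α : ℝ} (hα : 0 ≤ α) (m k : ℕ) :
    (m + k + k * α) * cesA α m ≤ (m + k) * cesA α (m + k) := by
  induction k with
  | zero => simp
  | succ k ih =>
    have hmono := cesA_monotone hα (m.le_add_right k)
    have hpos := cesA_pos (by linarith : -1 < α) m
    have hstep := succ_mul_cesA_succ α (m + k)
    rw [← add_assoc]
    push_cast at hstep ⊢
    nlinarith

theorem one_add_half_mul_cesA_le {α : ℝ} (hα : 0 ≤ α) {m n : ℕ} (h : 2 * m + 1 ≤ n) :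
    (1 + α / 2) * cesA α m ≤ cesA α n := by
  have hpos := cesA_pos (by linarith : -1 < α) m
  have key := add_mul_cesA_le hα m (m + 1)
  rw [← add_assoc, ← two_mul] at key
  have hmono := cesA_monotone hα h
  refine le_of_mul_le_mul_left ?_ (by positivity : (0 : ℝ) < 2 * m + 1)
  push_cast at key
  nlinarith

def weightedDirichlet (c : ℕ → ℝ) (n : ℕ) (x : G) : ℝ :=
  ∑ j ∈ range n, c j * dirichlet (n - j) x

@[fun_prop]
theorem continuous_weightedDirichlet (c : ℕ → ℝ) (n : ℕ) :
    Continuous (weightedDirichlet c n) := by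
  unfold weightedDirichlet; fun_prop

theorem cesKernel_eq (α : ℝ) (n : ℕ) (x : G) :
    cesKernel α n x = (cesA α n)⁻¹ * weightedDirichlet (cesA (α - 1)) n x := by
  rw [cesKernel, weightedDirichlet]
  congr 1
  refine sum_nbij' (n - ·) (n - ·) ?_ ?_ ?_ ?_ ?_ <;> intro k hk <;>
    simp only [mem_Icc, mem_range] at hk ⊢
  any_goals omega
  rw [Nat.sub_sub_self hk.2]

theorem weightedDirichlet_zero (c : ℕ → ℝ) (x : G) : weightedDirichlet c 0 x = 0 := by
  simp [weightedDirichlet]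

theorem weightedDirichlet_two_pow_add (c : ℕ → ℝ) {A m : ℕ} (h : m ≤ 2 ^ A) (x : G) :
    weightedDirichlet c (2 ^ A + m) x =
      (∑ j ∈ range (2 ^ A + m), c j) * dirichlet (2 ^ A) x
        - walsh (2 ^ A - 1) x * ∑ j ∈ range (2 ^ A), c (m + j) * dirichlet j x
        + rad A x * weightedDirichlet c m x := by
  have hlow : ∑ j ∈ range m, c j * dirichlet (m + 2 ^ A - j) x =
      (∑ j ∈ range m, c j) * dirichlet (2 ^ A) x + rad A x * weightedDirichlet c m x := by
    rw [weightedDirichlet, sum_mul, mul_sum, ← sum_add_distrib]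
    refine sum_congr rfl fun j hj => ?_
    have hj : j < m := mem_range.1 hj
    rw [show m + 2 ^ A - j = 2 ^ A + (m - j) by omega, dirichlet_two_pow_add (by omega)]
    ring
  have hhigh : ∑ j ∈ range (2 ^ A), c (m + j) * dirichlet (m + 2 ^ A - (m + j)) x =
      (∑ j ∈ range (2 ^ A), c (m + j)) * dirichlet (2 ^ A) x
        - walsh (2 ^ A - 1) x * ∑ j ∈ range (2 ^ A), c (m + j) * dirichlet j x := by
    rw [sum_mul, mul_sum, ← sum_sub_distrib]
    refine sum_congr rfl fun j hj => ?_
    rw [show m + 2 ^ A - (m + j) = 2 ^ A - j by omega,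
      dirichlet_two_pow_sub (mem_range.1 hj).le]
    ring
  rw [weightedDirichlet, add_comm (2 ^ A) m, sum_range_add, sum_range_add, hlow, hhigh]
  ring

theorem integral_abs_weightedDirichlet_two_pow_add_le {c : ℕ → ℝ} (hc : Antitone c)
    (hc0 : ∀ j, 0 ≤ c j) {A m : ℕ} (h : m ≤ 2 ^ A) :
    ∫ x, |weightedDirichlet c (2 ^ A + m) x| ∂μG ≤
      3 * ∑ j ∈ range (2 ^ A + m), c j + ∫ x, |weightedDirichlet c m x| ∂μG := by
  have htail : ∑ j ∈ range (2 ^ A), c (m + j) ≤ ∑ j ∈ range (2 ^ A + m), c j := by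
    rw [add_comm (2 ^ A) m, sum_range_add]
    linarith [sum_nonneg fun j (_ : j ∈ range m) => hc0 j]
  have hT := integral_abs_sum_mul_dirichlet_le (fun i j hij => hc (Nat.add_le_add_left hij m))
    (fun j => hc0 (m + j)) (2 ^ A)
  simp_rw [weightedDirichlet_two_pow_add c h, sub_eq_add_neg, ← neg_mul]
  calc _ ≤ ∫ x, |(∑ j ∈ range (2 ^ A + m), c j) * dirichlet (2 ^ A) x| ∂μG
        + ∫ x, |-walsh (2 ^ A - 1) x * ∑ j ∈ range (2 ^ A), c (m + j) * dirichlet j x| ∂μG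
        + ∫ x, |rad A x * weightedDirichlet c m x| ∂μG :=
        (integral_abs_add_le (integrable_of_continuous (by fun_prop))
          (integrable_of_continuous (by fun_prop))).trans (add_le_add
          (integral_abs_add_le (integrable_of_continuous (by fun_prop))
            (integrable_of_continuous (by fun_prop))) le_rfl)
    _ ≤ _ := by
        simp_rw [integral_abs_const_mul, abs_mul, abs_neg, abs_walsh, abs_rad, one_mul,
          integral_abs_dirichlet_two_pow, abs_of_nonneg (sum_nonneg fun j _ => hc0 j)]
        linarith

theorem integral_abs_weightedDirichlet_cesA_le {α : ℝ} (hα₀ : 0 < α) (hα₁ : α ≤ 1) (n : ℕ) :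
    ∫ x, |weightedDirichlet (cesA (α - 1)) n x| ∂μG ≤ 3 * (2 + α) / α * cesA α n := by
  induction n using Nat.two_pow_add_induction with
  | zero =>
    simp only [weightedDirichlet_zero, abs_zero, integral_zero]
    exact mul_nonneg (by positivity) (cesA_pos (by linarith) 0).le
  | two_pow_add A m hm ih =>
    have hratio := one_add_half_mul_cesA_le hα₀.le (show 2 * m + 1 ≤ 2 ^ A + m by omega)
    have hstep := integral_abs_weightedDirichlet_two_pow_add_le
      (cesA_antitone (β := α - 1) (by linarith) (by linarith))
      (fun j => (cesA_pos (β := α - 1) (by linarith) j).le) hm.le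
    have hsum := sum_range_cesA_sub_one_le hα₀ (2 ^ A + m)
    -- `C = 3 (2 + α) / α` is the fixed point of `C ↦ 3 + C / (1 + α / 2)`
    have hC : 3 * (2 + α) / α * cesA α m ≤ 3 * (2 + α) / α * cesA α (2 ^ A + m)
        - 3 * cesA α (2 ^ A + m) := by
      rw [div_mul_eq_mul_div, div_mul_eq_mul_div, le_sub_iff_add_le, div_add' _ _ _ hα₀.ne',
        div_le_div_iff_of_pos_right hα₀]
      nlinarith
    linarith

end Walsh

/-- uniform `L_1` bound for the `(C,α)` kernels:
`sup_n ∫_G |K_n^α| dμ ≤ c_α < ∞`. -/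
theorem statement18 (α : ℝ) (hα0 : 0 < α) (hα1 : α < 1) :
    ∃ c : ℝ, ∀ n : ℕ, 1 ≤ n → (∫ x, |cesKernel α n x| ∂μG) ≤ c := by
  refine ⟨3 * (2 + α) / α, fun n _ => ?_⟩
  have hA := Walsh.cesA_pos (by linarith : -1 < α) n
  simp_rw [Walsh.cesKernel_eq, abs_mul, abs_inv, abs_of_pos hA, integral_const_mul]
  rw [inv_mul_le_iff₀ hA, mul_comm]
  exact Walsh.integral_abs_weightedDirichlet_cesA_le hα0 hα1.le n
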